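/- arXiv:2505.01152 — 2 statements merged into one kernel-verified Lean document; each statement's English description precedes it below -/
import Mathlib

section
/- Let l ≥ 1, L = 2^l, F = [[1,0],[1,1]] over GF(2), and B_L = F^{⊗l} with rows and columns indexed 1,…,L. Fix i with 2 ≤ i ≤ L and let B̃_L(i) be obtained from B_L by replacing its first i−1 rows with zero rows. Then the minimum cardinality of a set S ⊆ {2,…,L} of column indices such that the GF(2)-sum of the columns of B̃_L(i) indexed by S equals the first column of B̃_L(i) is exactly 2L/2^{⌈log₂ i⌉} − 1; in particular, at least one such set S exists. -/
/-- The 2×2 polarization kernel `F = [[1,0],[1,1]]` over `GF(2)`. -/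
def polarF : Matrix (Fin 2) (Fin 2) (ZMod 2) := !![1, 0; 1, 1]

/-- `polarB l` is the `l`-fold Kronecker power `F^{⊗l}` of the polarization kernel,
with rows and columns reindexed by `Fin (2^l)` (row-major order), so that
`B_L = B_{L/2} ⊗ F` with `L = 2^l`. -/
def polarB : (l : ℕ) → Matrix (Fin (2 ^ l)) (Fin (2 ^ l)) (ZMod 2)
  | 0 => 1
  | l + 1 =>
      Matrix.reindex (finProdFinEquiv.trans (finCongr (pow_succ 2 l).symm))
        (finProdFinEquiv.trans (finCongr (pow_succ 2 l).symm))
        (Matrix.kroneckerMap (· * ·) (polarB l) polarF)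

/-- `polarBt l i` is the `i`-th polarization submatrix `B̃_L(i)` (with `i` 1-indexed,
`L = 2^l`): the matrix obtained from `B_L` by replacing its first `i - 1` rows with zeros. -/
def polarBt (l : ℕ) (i : ℕ) : Matrix (Fin (2 ^ l)) (Fin (2 ^ l)) (ZMod 2) :=
  Matrix.of fun r c => if i - 1 ≤ r.val then polarB l r c else 0

/-!
Reading indices in binary, `B_L` has a one at `(r, c)` exactly when the binary digits of `c` are
among those of `r`; so a set of columns is a family `T` of nonempty digit sets, and it represents
the first column of `B̃_L(i)` iff every row `r ≥ i - 1` contains an odd number of members of `T`.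
Put `t = ⌈log₂ i⌉`. The nonempty subsets of the digits `{t-1, …, l-1}` work: a row
`r ≥ 2^(t-1)` has `k ≥ 1` of these digits and contains `2^k - 1` of the subsets.
The lower bound uses only the rows with a digit `≥ t` and the row `2^t - 1`. Induct on the number
of high digits: removing one of them, `y`, the members of `T` avoiding `y` satisfy the condition
again, and so do the members containing `y` once `y` is deleted, except that they also contain
`∅`, which is then discarded. Hence `|T| ≥ 2 (2^(l-t) - 1) + 1`.
-/

open Finset

namespace Finset

section Family

variable {α : Type*} [DecidableEq α]

lemma card_filter_subset_insert (T : Finset (Finset α)) (R : Finset α) (y : α) :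
    #{A ∈ T | A ⊆ insert y R} =
      #{A ∈ {A ∈ T | y ∉ A} | A ⊆ R} +
        #{A ∈ {A ∈ T | y ∈ A}.image (·.erase y) | A ⊆ R} := by
  rw [← card_filter_add_card_filter_not (p := fun A => y ∈ A), filter_filter, filter_filter,
    filter_filter, add_comm, filter_image, card_image_of_injOn]
  · congr 2
    · exact filter_congr fun A _ => by
        rw [and_comm]; exact and_congr_right subset_insert_iff_of_notMem
    · rw [filter_filter]
      exact filter_congr fun A _ => by rw [subset_insert_iff, and_comm]
  · exact (erase_injOn' y).mono fun A hA => (mem_filter.1 (mem_filter.1 hA).1).2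

def IsOddCover (X Y : Finset α) (T : Finset (Finset α)) : Prop :=
  ∀ R ⊆ X ∪ Y, (R ∩ Y).Nonempty ∨ R = X → Odd #{A ∈ T | A ⊆ R}

namespace IsOddCover

variable {X Y R : Finset α} {T : Finset (Finset α)} {y : α}

lemma odd_card_filter_subset_insert (hT : IsOddCover X (insert y Y) T) (hR : R ⊆ X ∪ Y) :
    Odd #{A ∈ T | A ⊆ insert y R} :=
  hT _ (insert_subset (mem_union_right _ (mem_insert_self y Y))
      (hR.trans (union_subset_union_right (subset_insert y Y))))
    (Or.inl ⟨y, mem_inter.2 ⟨mem_insert_self y R, mem_insert_self y Y⟩⟩)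

lemma filter_notMem (hT : IsOddCover X (insert y Y) T) (hyX : y ∉ X) (hyY : y ∉ Y) :
    IsOddCover X Y {A ∈ T | y ∉ A} := by
  intro R hR hrow
  have hyR : y ∉ R := fun hy => (mem_union.1 (hR hy)).elim hyX hyY
  have hfilter : {A ∈ {A ∈ T | y ∉ A} | A ⊆ R} = {A ∈ T | A ⊆ R} := by
    ext A
    simp only [mem_filter]
    exact ⟨fun h => ⟨h.1.1, h.2⟩, fun h => ⟨⟨h.1, fun hy => hyR (h.2 hy)⟩, h.2⟩⟩
  rw [hfilter]
  exact hT R (hR.trans (union_subset_union_right (subset_insert y Y)))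
    (hrow.imp_left fun h => h.mono (inter_subset_inter_left (subset_insert y Y)))

lemma empty_mem_image_erase (hT : IsOddCover X (insert y Y) T) (h0 : ∅ ∉ T) :
    ∅ ∈ {A ∈ T | y ∈ A}.image (·.erase y) := by
  have hT₀ : #{A ∈ {A ∈ T | y ∉ A} | A ⊆ ∅} = 0 := by
    rw [card_eq_zero, filter_eq_empty_iff]
    exact fun A hA hA0 => h0 (subset_empty.1 hA0 ▸ (mem_filter.1 hA).1)
  have hodd := hT.odd_card_filter_subset_insert (empty_subset (X ∪ Y))
  rw [card_filter_subset_insert, hT₀, zero_add] at hodd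
  obtain ⟨A, hA⟩ := card_ne_zero.1 hodd.pos.ne'
  rw [mem_filter, subset_empty] at hA
  exact hA.2 ▸ hA.1

lemma image_erase (hT : IsOddCover X (insert y Y) T) (h0 : ∅ ∉ T) (hyX : y ∉ X)
    (hyY : y ∉ Y) :
    IsOddCover X Y (({A ∈ T | y ∈ A}.image (·.erase y)).erase ∅) := by
  intro R hR hrow
  have heven : Even #{A ∈ {A ∈ T | y ∈ A}.image (·.erase y) | A ⊆ R} := by
    have hodd := hT.odd_card_filter_subset_insert hR
    rw [card_filter_subset_insert] at hodd
    exact (Nat.odd_add.1 hodd).1 (hT.filter_notMem hyX hyY R hR hrow)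
  have hemptyR : ∅ ∈ {A ∈ {A ∈ T | y ∈ A}.image (·.erase y) | A ⊆ R} :=
    mem_filter.2 ⟨hT.empty_mem_image_erase h0, empty_subset R⟩
  rw [filter_erase, card_erase_of_mem hemptyR]
  exact Nat.Even.sub_odd (card_pos.2 ⟨∅, hemptyR⟩) heven odd_one

lemma two_pow_card_succ_le_card_add_one (hXY : Disjoint X Y) (hT : IsOddCover X Y T)
    (h0 : ∅ ∉ T) : 2 ^ (#Y + 1) ≤ #T + 1 := by
  induction Y using Finset.induction_on generalizing T with
  | empty =>
    obtain ⟨A, hA⟩ := card_ne_zero.1 (hT X subset_union_left (Or.inr rfl)).pos.ne'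
    have : 0 < #T := card_pos.2 ⟨A, (mem_filter.1 hA).1⟩
    rw [card_empty]
    omega
  | insert y Y hyY ih =>
    have hyX : y ∉ X := fun hy => disjoint_left.1 hXY hy (mem_insert_self y Y)
    have hXY' : Disjoint X Y := hXY.mono_right (subset_insert y Y)
    have h₀ := ih hXY' (hT.filter_notMem hyX hyY) fun h => h0 (mem_filter.1 h).1
    have h₁ := ih hXY' (hT.image_erase h0 hyX hyY) (notMem_erase ∅ _)
    have hsplit := card_filter_add_card_filter_not (s := T) (y ∈ ·)
    have hinj : #({A ∈ T | y ∈ A}.image (·.erase y)) = #{A ∈ T | y ∈ A} :=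
      card_image_of_injOn ((erase_injOn' y).mono fun A hA => (mem_filter.1 hA).2)
    have herase := card_erase_add_one (hT.empty_mem_image_erase h0)
    rw [card_insert_of_notMem hyY, pow_succ]
    omega

end IsOddCover

lemma odd_card_filter_subset_powerset_erase_empty {Y R : Finset α} (h : (R ∩ Y).Nonempty) :
    Odd #{A ∈ Y.powerset.erase ∅ | A ⊆ R} := by
  have hfilter : {A ∈ Y.powerset | A ⊆ R} = (R ∩ Y).powerset := by
    ext A
    simp only [mem_filter, mem_powerset, subset_inter_iff]
    tauto
  rw [filter_erase, hfilter, card_erase_of_mem (empty_mem_powerset _), card_powerset]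
  exact Nat.Even.sub_odd Nat.one_le_two_pow (Nat.even_pow.2 ⟨even_two, h.card_pos.ne'⟩) odd_one

end Family

lemma equivBitIndices_subset_iff {c r : ℕ} :
    equivBitIndices c ⊆ equivBitIndices r ↔ ∀ k, c.testBit k → r.testBit k := by
  simp [subset_iff]

lemma equivBitIndices_subset_iff_div_two {c r : ℕ} :
    equivBitIndices c ⊆ equivBitIndices r ↔
      (c % 2 = 1 → r % 2 = 1) ∧ equivBitIndices (c / 2) ⊆ equivBitIndices (r / 2) := by
  simp only [equivBitIndices_subset_iff, Nat.testBit_div_two]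
  refine ⟨fun h => ⟨fun hc => ?_, fun k => h (k + 1)⟩, fun ⟨h0, h⟩ k => k.casesOn ?_ h⟩
  · simpa using h 0 (by simpa using hc)
  · simpa using h0

lemma equivBitIndices_subset_range_iff {n l : ℕ} :
    equivBitIndices n ⊆ range l ↔ n < 2 ^ l := by
  constructor
  · intro h
    rw [← equivBitIndices.symm_apply_apply n, equivBitIndices_symm_apply]
    exact Nat.geomSum_lt le_rfl fun k hk => mem_range.1 (h hk)
  · intro h k hk
    simp only [equivBitIndices_apply, List.mem_toFinset, Nat.mem_bitIndices] at hk
    exact mem_range.2 ((pow_lt_pow_iff_right₀ one_lt_two).1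
      ((Nat.ge_two_pow_of_testBit hk).trans_lt h))

lemma equivBitIndices_two_pow_sub_one (t : ℕ) : equivBitIndices (2 ^ t - 1) = range t := by
  ext k
  simp

lemma two_pow_le_iff_equivBitIndices_inter_nonempty {n s l : ℕ} (hn : n < 2 ^ l) :
    2 ^ s ≤ n ↔ (equivBitIndices n ∩ Ico s l).Nonempty := by
  constructor
  · intro h
    by_contra hempty
    refine (Nat.lt_pow_two_of_testBit n fun k hk => ?_).not_ge h
    rcases lt_or_ge k l with hkl | hkl
    · by_contra hbit
      exact hempty ⟨k, by simpa [hkl, hk] using hbit⟩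
    · exact Nat.testBit_lt_two_pow (hn.trans_le (pow_le_pow_right₀ one_le_two hkl))
  · rintro ⟨k, hk⟩
    simp only [mem_inter, equivBitIndices_apply, List.mem_toFinset, Nat.mem_bitIndices,
      mem_Ico] at hk
    exact (pow_le_pow_right₀ one_le_two hk.2.1).trans (Nat.ge_two_pow_of_testBit hk.1)

end Finset

lemma polarF_apply (a b : Fin 2) :
    polarF a b = if b.val % 2 = 1 → a.val % 2 = 1 then 1 else 0 := by
  fin_cases a <;> fin_cases b <;> rfl

lemma polarB_succ_apply (l : ℕ) (r c : Fin (2 ^ (l + 1))) :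
    polarB (l + 1) r c =
      polarB l ⟨r / 2, Nat.div_lt_of_lt_mul (pow_succ' 2 l ▸ r.isLt)⟩
          ⟨c / 2, Nat.div_lt_of_lt_mul (pow_succ' 2 l ▸ c.isLt)⟩ *
        polarF ⟨r % 2, Nat.mod_lt _ two_pos⟩ ⟨c % 2, Nat.mod_lt _ two_pos⟩ :=
  rfl

lemma polarB_apply (l : ℕ) (r c : Fin (2 ^ l)) :
    polarB l r c = if equivBitIndices c ⊆ equivBitIndices r then 1 else 0 := by
  induction l with
  | zero =>
    obtain rfl : r = c := Subsingleton.elim (α := Fin 1) r c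
    simp [polarB]
  | succ l ih =>
    rw [polarB_succ_apply, ih, polarF_apply, ite_zero_mul_ite_zero, mul_one]
    refine if_congr ?_ rfl rfl
    simp only [Nat.mod_mod]
    exact and_comm.trans equivBitIndices_subset_iff_div_two.symm

def RepresentsFirstColumn (l i : ℕ) (S : Finset (Fin (2 ^ l))) : Prop :=
  ∀ r : Fin (2 ^ l), i - 1 ≤ r.val →
    Odd #{j ∈ S | equivBitIndices j.val ⊆ equivBitIndices r.val}

lemma sum_polarBt_eq_first_column_iff (l i : ℕ) (S : Finset (Fin (2 ^ l))) :
    (∀ r : Fin (2 ^ l), ∑ j ∈ S, polarBt l i r j = polarBt l i r ⟨0, by positivity⟩) ↔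
      RepresentsFirstColumn l i S := by
  refine forall_congr' fun r => ?_
  by_cases hr : i - 1 ≤ r.val
  · simp only [polarBt, Matrix.of_apply, if_pos hr, polarB_apply, sum_boole]
    rw [if_pos (by simp), ZMod.natCast_eq_one_iff_odd, imp_iff_right hr]
  · simp only [polarBt, Matrix.of_apply, if_neg hr, sum_const_zero]
    exact iff_of_true trivial fun h => absurd h hr

lemma card_filter_equivBitIndices_subset {l : ℕ} (S : Finset (Fin (2 ^ l))) (R : Finset ℕ) :
    #{j ∈ S | equivBitIndices j.val ⊆ R} =
      #{A ∈ S.image (equivBitIndices ∘ Fin.val) | A ⊆ R} := by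
  rw [filter_image, card_image_of_injective _ (equivBitIndices.injective.comp Fin.val_injective)]
  rfl

lemma RepresentsFirstColumn.two_pow_le_card_add_one {l i : ℕ} (hL : i ≤ 2 ^ l)
    {S : Finset (Fin (2 ^ l))} (hS : RepresentsFirstColumn l i S) (hS0 : ∀ j ∈ S, j.val ≠ 0) :
    2 ^ (l - Nat.clog 2 i + 1) ≤ #S + 1 := by
  set t := Nat.clog 2 i
  have hit : i ≤ 2 ^ t := Nat.le_pow_clog one_lt_two i
  have htl : t ≤ l := (Nat.clog_le_iff_le_pow one_lt_two).2 hL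
  have h0 : ∅ ∉ S.image (equivBitIndices ∘ Fin.val) := by
    simp only [mem_image, Function.comp_apply, not_exists, not_and]
    intro j hj hj0
    exact hS0 j hj (equivBitIndices.injective (hj0.trans (by simp)))
  have hodd : IsOddCover (range t) (Ico t l) (S.image (equivBitIndices ∘ Fin.val)) := by
    intro R hR hrow
    have hRl : R ⊆ range l := by
      rwa [range_eq_Ico, Ico_union_Ico_eq_Ico t.zero_le htl, ← range_eq_Ico] at hR
    obtain ⟨r, rfl⟩ := equivBitIndices.surjective R
    have hr : r < 2 ^ l := equivBitIndices_subset_range_iff.1 hRl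
    have hir : i - 1 ≤ r := by
      rcases hrow with hrow | hrow
      · have := (two_pow_le_iff_equivBitIndices_inter_nonempty hr).2 hrow
        omega
      · rw [← equivBitIndices_two_pow_sub_one, equivBitIndices.apply_eq_iff_eq] at hrow
        omega
    rw [← card_filter_equivBitIndices_subset]
    exact hS ⟨r, hr⟩ hir
  have hdisj : Disjoint (range t) (Ico t l) := by
    rw [range_eq_Ico]
    exact Ico_disjoint_Ico_consecutive 0 t l
  have key := hodd.two_pow_card_succ_le_card_add_one hdisj h0
  rwa [Nat.card_Ico, card_image_of_injective _ (equivBitIndices.injective.comp Fin.val_injective)]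
    at key

lemma exists_representsFirstColumn_card_eq {l i : ℕ} (h2 : 2 ≤ i) (hL : i ≤ 2 ^ l) :
    ∃ S : Finset (Fin (2 ^ l)),
      (∀ j ∈ S, j.val ≠ 0) ∧ #S = 2 ^ (l - Nat.clog 2 i + 1) - 1 ∧
        RepresentsFirstColumn l i S := by
  set t := Nat.clog 2 i
  have ht : 0 < t := Nat.clog_pos one_lt_two h2
  have htl : t ≤ l := (Nat.clog_le_iff_le_pow one_lt_two).2 hL
  have hti : 2 ^ (t - 1) < i := Nat.pow_pred_clog_lt_self one_lt_two h2
  set T := (Ico (t - 1) l).powerset.erase ∅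
  set S := univ.filter fun j : Fin (2 ^ l) => equivBitIndices j.val ∈ T
  have hST : S.image (equivBitIndices ∘ Fin.val) = T := by
    ext A
    simp only [S, mem_image, mem_filter, mem_univ, true_and, Function.comp_apply]
    refine ⟨fun ⟨j, hj, hjA⟩ => hjA ▸ hj, fun hA => ?_⟩
    have hAl : A ⊆ range l :=
      (mem_powerset.1 (mem_of_mem_erase hA)).trans fun k hk => mem_range.2 (mem_Ico.1 hk).2
    obtain ⟨a, rfl⟩ := equivBitIndices.surjective A
    exact ⟨⟨a, equivBitIndices_subset_range_iff.1 hAl⟩, hA, rfl⟩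
  refine ⟨S, fun j hj hj0 => ?_, ?_, fun r hr => ?_⟩
  · exact ne_of_mem_erase (mem_filter.1 hj).2 (by rw [hj0]; simp)
  · rw [← card_image_of_injective S (equivBitIndices.injective.comp Fin.val_injective), hST,
      card_erase_of_mem (empty_mem_powerset _), card_powerset, Nat.card_Ico]
    congr 2
    omega
  · rw [card_filter_equivBitIndices_subset, hST]
    exact odd_card_filter_subset_powerset_erase_empty
      ((two_pow_le_iff_equivBitIndices_inter_nonempty r.isLt).1 (by omega))

/-- For `l ≥ 1`, `L = 2^l` and `2 ≤ i ≤ L`, the minimum cardinality of a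
set `S` of column indices other than the first such that the `GF(2)`-sum of the columns of
`B̃_L(i)` indexed by `S` equals the first column of `B̃_L(i)` is exactly
`2L/2^{⌈log₂ i⌉} − 1` (in particular such a set exists). -/
theorem polarBt_min_representation (l : ℕ) (i : ℕ) (h2 : 2 ≤ i)
    (hL : i ≤ 2 ^ l) :
    IsLeast
      {n : ℕ | ∃ S : Finset (Fin (2 ^ l)),
        (∀ j ∈ S, j.val ≠ 0) ∧ S.card = n ∧
        ∀ r : Fin (2 ^ l), ∑ j ∈ S, polarBt l i r j = polarBt l i r ⟨0, by positivity⟩}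
      (2 * 2 ^ l / 2 ^ Nat.clog 2 i - 1) := by
  have htl : Nat.clog 2 i ≤ l := (Nat.clog_le_iff_le_pow one_lt_two).2 hL
  rw [← pow_succ', Nat.pow_div (by omega) two_pos, Nat.sub_add_comm htl]
  obtain ⟨S, hS0, hcard, hS⟩ := exists_representsFirstColumn_card_eq h2 hL
  refine ⟨⟨S, hS0, hcard, (sum_polarBt_eq_first_column_iff l i S).2 hS⟩, ?_⟩
  rintro n ⟨S, hS0, rfl, hS⟩
  have := ((sum_polarBt_eq_first_column_iff l i S).1 hS).two_pow_le_card_add_one hL hS0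
  omega
end

section
/- Let l ≥ 0, L = 2^l, and F = [[1,0],[1,1]] over GF(2), with B_L = F^{⊗l} having rows and columns indexed 1,…,L. Then for every k with 0 ≤ k ≤ l and every j with 0 ≤ j < 2^{l−k}, the 2^k × 2^k submatrix of B_L consisting of rows L − 2^k + 1, …, L and columns j·2^k + 1, …, (j+1)·2^k equals F^{⊗k}. In particular, for i = L + 1 − 2^k the nonzero rows of B̃_L(i) consist of L/2^k identical copies of the invertible matrix F^{⊗k} placed side by side. -/
/-!
Writing `B_{m+k} = B_m ⊗ B_k` entrywise, the entry of `B_{m+k}` at `(x, y)` is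
`B_m (x / 2^k) (y / 2^k) * B_k (x % 2^k) (y % 2^k)`. The last row of `B_m` is all ones (the last
row of `F` is), so every row of the last row-block of `B_{m+k}` is the corresponding row of `B_k`
repeated `2^m` times. Invertibility follows from `det F = 1` and multiplicativity of the
determinant of Kronecker products.
-/

lemma polarB_succ_apply_s16 (l : ℕ) (x y : Fin (2 ^ (l + 1))) :
    polarB (l + 1) x y =
      polarB l ⟨x / 2, by omega⟩ ⟨y / 2, by omega⟩ *
        polarF ⟨x % 2, by omega⟩ ⟨y % 2, by omega⟩ :=
  rfl

lemma polarB_zero_apply (x y : Fin (2 ^ 0)) : polarB 0 x y = 1 := by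
  rw [Fin.fin_one_eq_zero x, Fin.fin_one_eq_zero y]
  rfl

lemma polarB_add_apply (m k : ℕ) (x y : Fin (2 ^ (m + k))) :
    polarB (m + k) x y =
      polarB m ⟨x / 2 ^ k, Nat.div_lt_of_lt_mul (by rw [← pow_add, Nat.add_comm k m]; exact x.isLt)⟩
          ⟨y / 2 ^ k, Nat.div_lt_of_lt_mul (by rw [← pow_add, Nat.add_comm k m]; exact y.isLt)⟩ *
        polarB k ⟨x % 2 ^ k, Nat.mod_lt _ (Nat.two_pow_pos k)⟩
          ⟨y % 2 ^ k, Nat.mod_lt _ (Nat.two_pow_pos k)⟩ := by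
  induction k with
  | zero => simp [polarB_zero_apply]
  | succ k ih =>
    refine (polarB_succ_apply_s16 (m + k) x y).trans ?_
    rw [ih, polarB_succ_apply_s16 k, mul_assoc]
    simp only [pow_succ', Nat.div_div_eq_div_mul, Nat.mod_mul_right_div_self,
      Nat.mod_mul_right_mod]

lemma polarF_one_apply (b : Fin 2) : polarF 1 b = 1 := by
  fin_cases b <;> rfl

lemma polarB_last_row_apply (m : ℕ) (x y : Fin (2 ^ m)) (hx : x.val = 2 ^ m - 1) :
    polarB m x y = 1 := by
  induction m with
  | zero => exact polarB_zero_apply x y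
  | succ m ih =>
    have hx2 : x.val % 2 = 1 := by rw [hx, pow_succ]; omega
    rw [polarB_succ_apply_s16, ih _ _ (by simp only [hx, pow_succ]; omega)]
    simp only [hx2, one_mul]
    exact polarF_one_apply _

lemma polarB_add_apply_of_div_eq (m k : ℕ) (x y : Fin (2 ^ (m + k)))
    (hx : x.val / 2 ^ k = 2 ^ m - 1) :
    polarB (m + k) x y =
      polarB k ⟨x % 2 ^ k, Nat.mod_lt _ (Nat.two_pow_pos k)⟩
        ⟨y % 2 ^ k, Nat.mod_lt _ (Nat.two_pow_pos k)⟩ := by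
  rw [polarB_add_apply, polarB_last_row_apply _ _ _ hx, one_mul]

lemma polarB_det (l : ℕ) : (polarB l).det = 1 := by
  induction l with
  | zero => exact Matrix.det_one
  | succ l ih =>
    have hF : polarF.det = 1 := by decide
    rw [polarB, Matrix.det_reindex_self, Matrix.det_kronecker, ih, hF, one_pow, one_pow, one_mul]

lemma polarB_isUnit (l : ℕ) : IsUnit (polarB l) :=
  (Matrix.isUnit_iff_isUnit_det _).mpr (polarB_det l ▸ isUnit_one)

lemma two_pow_add_sub_two_pow (m k : ℕ) : 2 ^ (m + k) - 2 ^ k = (2 ^ m - 1) * 2 ^ k := by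
  rw [pow_add, Nat.sub_mul, one_mul]

/-- For `0 ≤ k ≤ l` and `0 ≤ j < 2^{l-k}`, the `2^k × 2^k` submatrix of
`B_L = F^{⊗l}` (`L = 2^l`) formed by its last `2^k` rows and columns `j·2^k, …, (j+1)·2^k − 1`
(0-indexed) equals `F^{⊗k}`. In particular, for `i = L + 1 − 2^k` the nonzero rows of
`B̃_L(i)` consist of `L/2^k` side-by-side copies of the invertible matrix `F^{⊗k}`. -/
theorem polarB_block_structure (l : ℕ) :
    (∀ (k : ℕ) (hk : k ≤ l) (j : ℕ) (hj : j < 2 ^ (l - k)) (r c : Fin (2 ^ k)),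
        polarB l
          ⟨2 ^ l - 2 ^ k + r.val, by
            have h := Nat.pow_le_pow_right (by norm_num : 1 ≤ 2) hk
            have hrv : 2 ^ l - 2 ^ k + r.val < 2 ^ l - 2 ^ k + 2 ^ k :=
              Nat.add_lt_add_left r.isLt _
            rwa [Nat.sub_add_cancel h] at hrv⟩
          ⟨j * 2 ^ k + c.val, by
            calc j * 2 ^ k + c.val < j * 2 ^ k + 2 ^ k := Nat.add_lt_add_left c.isLt _
              _ = (j + 1) * 2 ^ k := by ring
              _ ≤ 2 ^ (l - k) * 2 ^ k := Nat.mul_le_mul_right (2 ^ k) hj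
              _ = 2 ^ l := by rw [← pow_add]; congr 1; omega⟩
          = polarB k r c) ∧
    ∀ (k : ℕ) (hk : k ≤ l),
      IsUnit (polarB k) ∧
      ∀ (r c : Fin (2 ^ l)) (hr : 2 ^ l - 2 ^ k ≤ r.val),
        polarBt l (2 ^ l + 1 - 2 ^ k) r c
          = polarB k
              ⟨r.val - (2 ^ l - 2 ^ k), by
                have h := Nat.pow_le_pow_right (by norm_num : 1 ≤ 2) hk
                have h2 := r.isLt
                omega⟩
              ⟨c.val % 2 ^ k, Nat.mod_lt _ (by positivity)⟩ := by
  refine ⟨fun k hk j hj r c => ?_, fun k hk => ⟨polarB_isUnit k, fun r c hr => ?_⟩⟩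
  all_goals obtain ⟨m, rfl⟩ : ∃ m, l = m + k := ⟨l - k, by omega⟩
  · have hrow : 2 ^ (m + k) - 2 ^ k + r.val = r.val + (2 ^ m - 1) * 2 ^ k := by
      rw [two_pow_add_sub_two_pow, add_comm]
    rw [polarB_add_apply_of_div_eq _ _ _ _ (by
      simp only [hrow, Nat.add_mul_div_right _ _ (Nat.two_pow_pos k), Nat.div_eq_of_lt r.isLt,
        zero_add])]
    congr 1 <;> ext
    · simp only [hrow, Nat.add_mul_mod_self_right, Nat.mod_eq_of_lt r.isLt]
    · simp only [add_comm (j * 2 ^ k), Nat.add_mul_mod_self_right, Nat.mod_eq_of_lt c.isLt]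
  · have hdiv : r.val / 2 ^ k = 2 ^ m - 1 := by
      refine Nat.div_eq_of_lt_le ?_ ?_
      · rw [← two_pow_add_sub_two_pow]; exact hr
      · rw [Nat.sub_add_cancel Nat.one_le_two_pow, ← pow_add]; exact r.isLt
    have hunmasked : 2 ^ (m + k) + 1 - 2 ^ k - 1 ≤ r.val := by omega
    rw [polarBt, Matrix.of_apply, if_pos hunmasked, polarB_add_apply_of_div_eq _ _ _ _ hdiv]
    congr 2
    rw [Nat.mod_def, hdiv, two_pow_add_sub_two_pow, mul_comm]
end
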